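/- arXiv:2605.12958 — 7 statements merged into one kernel-verified Lean document; each statement's English description precedes it below -/
import Mathlib

section
/- For every nonnegative integer k there exists a unique nonnegative integer d such that d² + d ≤ 2k ≤ d² + 3d, and for every real number a > 0 one has N_k(a,a) = d·a. -/
open Filter

/-- `ellN a b k` is the `(k+1)`-st smallest element (with multiplicity) of
`{a*m + b*n : m, n ∈ ℤ≥0}`: the smallest `L ≥ 0` such that at least `k+1` pairs
`(m,n)` of nonnegative integers satisfy `a*m + b*n ≤ L`. -/
noncomputable def ellN (a b : ℝ) (k : ℕ) : ℝ :=
  sInf {L : ℝ | 0 ≤ L ∧ k + 1 ≤ {p : ℕ × ℕ | a * p.1 + b * p.2 ≤ L}.ncard}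

/-!
Scaling by `a`, the pairs with `a m + a n ≤ L` are those with `m + n ≤ ⌊L / a⌋`, and there are
`(t + 1)(t + 2) / 2` pairs with `m + n ≤ t`. The inequalities on `d` say exactly that
`d (d + 1) / 2 ≤ k < (d + 1)(d + 2) / 2`, i.e. that `t = d` is the least level at which at least
`k + 1` pairs are counted; this characterisation also gives the uniqueness of `d`.
-/

lemma ncard_setOf_add_le_mul_two (t : ℕ) :
    {p : ℕ × ℕ | p.1 + p.2 ≤ t}.ncard * 2 = (t + 1) * (t + 2) := by
  have hset : {p : ℕ × ℕ | p.1 + p.2 ≤ t} =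
      ↑((Finset.range (t + 1)).biUnion Finset.HasAntidiagonal.antidiagonal) := by
    ext p
    simp
  have hdisj : ((Finset.range (t + 1) : Set ℕ)).PairwiseDisjoint
      Finset.HasAntidiagonal.antidiagonal := fun x _ y _ hxy =>
    Finset.disjoint_left.2 fun p hx hy => hxy <| by
      rw [Finset.HasAntidiagonal.mem_antidiagonal] at hx hy
      rw [← hx, ← hy]
  rw [hset, Set.ncard_coe_finset, Finset.card_biUnion hdisj]
  simp only [Finset.Nat.card_antidiagonal]
  rw [Finset.sum_add_distrib, add_mul, Finset.sum_range_id_mul_two]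
  simp only [Nat.add_sub_cancel, Finset.sum_const, Finset.card_range, smul_eq_mul]
  ring

lemma setOf_mul_add_mul_le_eq_floor {a L : ℝ} (ha : 0 < a) (hL : 0 ≤ L) :
    {p : ℕ × ℕ | a * p.1 + a * p.2 ≤ L} = {p : ℕ × ℕ | p.1 + p.2 ≤ ⌊L / a⌋₊} := by
  ext p
  simp only [Set.mem_ofPred_eq]
  rw [Nat.le_floor_iff (div_nonneg hL ha.le), le_div_iff₀ ha]
  push_cast
  constructor <;> intro h <;> linarith

lemma le_ncard_setOf_add_le_iff {k d : ℕ} (hd : d ^ 2 + d ≤ 2 * k ∧ 2 * k ≤ d ^ 2 + 3 * d)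
    (t : ℕ) : k + 1 ≤ {p : ℕ × ℕ | p.1 + p.2 ≤ t}.ncard ↔ d ≤ t := by
  have hcard := ncard_setOf_add_le_mul_two t
  constructor
  · intro hk
    by_contra! htd
    have : (t + 1) * (t + 2) ≤ d * (d + 1) := Nat.mul_le_mul htd (by omega)
    nlinarith
  · intro hdt
    have : (d + 1) * (d + 2) ≤ (t + 1) * (t + 2) := by gcongr
    nlinarith

lemma exists_sq_add_le_two_mul_le (k : ℕ) :
    ∃ d : ℕ, d ^ 2 + d ≤ 2 * k ∧ 2 * k ≤ d ^ 2 + 3 * d := by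
  induction k with
  | zero => exact ⟨0, by norm_num⟩
  | succ n ih =>
    obtain ⟨d, hd1, hd2⟩ := ih
    by_cases h : 2 * (n + 1) ≤ d ^ 2 + 3 * d
    · exact ⟨d, by omega, h⟩
    · -- `d ^ 2 + 3 * d = d * (d + 1) + 2 * d` is even, so `2 * n` reaches it exactly
      obtain ⟨c, hc⟩ := Nat.even_mul_succ_self d
      have h2n : 2 * n = d ^ 2 + 3 * d := by
        have : d ^ 2 + 3 * d = d * (d + 1) + 2 * d := by ring
        omega
      exact ⟨d + 1, by nlinarith, by nlinarith⟩

lemma ellN_self_eq {k d : ℕ} (hd : d ^ 2 + d ≤ 2 * k ∧ 2 * k ≤ d ^ 2 + 3 * d)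
    {a : ℝ} (ha : 0 < a) : ellN a a k = d * a := by
  apply IsLeast.csInf_eq
  refine ⟨⟨by positivity, ?_⟩, ?_⟩
  · rw [setOf_mul_add_mul_le_eq_floor ha (by positivity), mul_div_cancel_right₀ _ ha.ne',
      Nat.floor_natCast]
    exact (le_ncard_setOf_add_le_iff hd d).2 le_rfl
  · rintro L ⟨hL0, hL⟩
    rw [setOf_mul_add_mul_le_eq_floor ha hL0, le_ncard_setOf_add_le_iff hd] at hL
    have hdL : (d : ℝ) ≤ L / a :=
      (Nat.cast_le.2 hL).trans (Nat.floor_le (div_nonneg hL0 ha.le))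
    exact (le_div_iff₀ ha).1 hdL

theorem stmt_0 (k : ℕ) :
    (∃! d : ℕ, d ^ 2 + d ≤ 2 * k ∧ 2 * k ≤ d ^ 2 + 3 * d) ∧
      ∀ d : ℕ, (d ^ 2 + d ≤ 2 * k ∧ 2 * k ≤ d ^ 2 + 3 * d) →
        ∀ a : ℝ, 0 < a → ellN a a k = d * a := by
  refine ⟨?_, fun d hd a ha => ellN_self_eq hd ha⟩
  obtain ⟨d, hd⟩ := exists_sq_add_le_two_mul_le k
  refine ⟨d, hd, fun e he => le_antisymm ?_ ?_⟩
  · exact (le_ncard_setOf_add_le_iff he d).1 ((le_ncard_setOf_add_le_iff hd d).2 le_rfl)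
  · exact (le_ncard_setOf_add_le_iff hd e).1 ((le_ncard_setOf_add_le_iff he e).2 le_rfl)
end

section
/- Let a, b > 0 be real numbers with a/b irrational, and let m₁, m₂ be nonnegative integers. Then the number of pairs (x,y) ∈ ℤ_{≥0}² satisfying a·x + b·y ≤ a·m₁ + b·m₂ equals 1 + m₁ + m₂ + m₁·m₂ + Σ_{j=1}^{m₁} ⌊j·a/b⌋ + Σ_{j=1}^{m₂} ⌊j·b/a⌋. -/
open Finset

open scoped Classical in
lemma sum_card_filter_comm {α β : Type*} (s : Finset α) (t : Finset β) (P : α → β → Prop) :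
    ∑ i ∈ s, (t.filter (P i)).card = ∑ j ∈ t, (s.filter (fun i : α => P i j)).card := by
  simp only [Finset.card_filter]
  exact Finset.sum_comm

open scoped Classical in
lemma recip (a b : ℝ) (ha : 0 < a) (hb : 0 < b) (hirr : Irrational (b / a)) (m : ℕ) :
    ∑ i ∈ range ⌊(m:ℝ) * b / a⌋₊, (m - ⌊((i:ℝ)+1) * a / b⌋₊) =
      ∑ j ∈ Icc 1 m, ⌊(j:ℝ) * b / a⌋₊ := by
  set K := ⌊(m:ℝ) * b / a⌋₊ with hK
  have h1 : ∀ i ∈ range K, m - ⌊((i:ℝ)+1) * a / b⌋₊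
      = ((Icc 1 m).filter (fun j : ℕ => ((i:ℝ)+1) * a < (j:ℝ) * b)).card := by
    intro i _
    have hq : ∀ j : ℕ, (((i:ℝ)+1) * a < (j:ℝ) * b) ↔ ⌊((i:ℝ)+1)*a/b⌋₊ < j := by
      intro j
      rw [Nat.floor_lt (by positivity), div_lt_iff₀ hb]
    have he : (Icc 1 m).filter (fun j : ℕ => ((i:ℝ)+1) * a < (j:ℝ) * b)
        = Icc (⌊((i:ℝ)+1)*a/b⌋₊ + 1) m := by
      ext j
      simp only [mem_filter, mem_Icc, hq]
      omega
    rw [he, Nat.card_Icc]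
    omega
  have h2 : ∀ j ∈ Icc 1 m, ((range K).filter (fun i : ℕ => ((i:ℝ)+1) * a < (j:ℝ) * b)).card
      = ⌊(j:ℝ) * b / a⌋₊ := by
    intro j hj
    obtain ⟨hj1, hj2⟩ := mem_Icc.mp hj
    have hjirr : Irrational ((j:ℝ) * b / a) := by
      rw [mul_div_assoc]
      exact hirr.natCast_mul (Nat.one_le_iff_ne_zero.mp hj1)
    have hcond : ∀ i : ℕ, (((i:ℝ)+1) * a < (j:ℝ) * b) ↔ i < ⌊(j:ℝ)*b/a⌋₊ := by
      intro i
      rw [← Nat.add_one_le_iff, Nat.le_floor_iff (by positivity)]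
      push_cast
      constructor
      · intro h
        rw [le_div_iff₀ ha]
        linarith
      · intro h
        have hne : ((i:ℝ)+1) ≠ (j:ℝ) * b / a := by
          intro hc
          exact (hjirr.ne_nat (i+1)) (by push_cast; linarith [hc])
        have hlt : ((i:ℝ)+1) < (j:ℝ) * b / a := lt_of_le_of_ne h hne
        rw [lt_div_iff₀ ha] at hlt
        exact hlt
    have he : (range K).filter (fun i : ℕ => ((i:ℝ)+1) * a < (j:ℝ) * b)
        = range ⌊(j:ℝ)*b/a⌋₊ := by
      have hle : ⌊(j:ℝ)*b/a⌋₊ ≤ K := by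
        apply Nat.floor_le_floor
        have hjm : (j:ℝ) ≤ (m:ℝ) := by exact_mod_cast hj2
        gcongr
      ext i
      simp only [mem_filter, mem_range, hcond]
      omega
    rw [he, card_range]
  rw [Finset.sum_congr rfl h1, sum_card_filter_comm, Finset.sum_congr rfl h2]

open scoped Classical in
theorem stmt_1 (a b : ℝ) (ha : 0 < a) (hb : 0 < b) (hirr : Irrational (a / b))
    (m₁ m₂ : ℕ) :
    ({p : ℕ × ℕ | a * p.1 + b * p.2 ≤ a * m₁ + b * m₂}.ncard : ℤ) =
      1 + m₁ + m₂ + m₁ * m₂ +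
        (∑ j ∈ Finset.Icc 1 m₁, ⌊(j : ℝ) * a / b⌋) +
        (∑ j ∈ Finset.Icc 1 m₂, ⌊(j : ℝ) * b / a⌋) := by
  have hba : Irrational (b / a) := by
    rw [← inv_div]; exact hirr.inv
  set K := ⌊(m₂:ℝ) * b / a⌋₊ with hK
  set M := ⌊(m₁:ℝ) * a / b⌋₊ + m₂ + 1 with hM
  set N := m₁ + 1 + K with hN
  set F : Finset (ℕ × ℕ) :=
    ((range N) ×ˢ (range M)).filter
      (fun p : ℕ × ℕ => a * p.1 + b * p.2 ≤ a * m₁ + b * m₂) with hF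
  have hSF : {p : ℕ × ℕ | a * p.1 + b * p.2 ≤ a * m₁ + b * m₂} = ↑F := by
    ext p
    simp only [Set.mem_setOf_eq, hF, coe_filter, mem_product, mem_range]
    constructor
    · intro h
      refine ⟨⟨?_, ?_⟩, h⟩
      · have h1 : a * p.1 ≤ a * m₁ + b * m₂ := by
          have h0 : (0:ℝ) ≤ b * p.2 := by positivity
          linarith
        have h2 : (p.1 : ℝ) ≤ (m₂:ℝ) * b / a + m₁ := by
          rw [div_add' _ _ _ (ne_of_gt ha), le_div_iff₀ ha]
          linarith
        have h3 : p.1 ≤ K + m₁ := by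
          have := Nat.le_floor h2
          rwa [Nat.floor_add_natCast (by positivity)] at this
        omega
      · have h1 : b * p.2 ≤ a * m₁ + b * m₂ := by
          have h0 : (0:ℝ) ≤ a * p.1 := by positivity
          linarith
        have h2 : (p.2 : ℝ) ≤ (m₁:ℝ) * a / b + m₂ := by
          rw [div_add' _ _ _ (ne_of_gt hb), le_div_iff₀ hb]
          linarith
        have h3 : p.2 ≤ ⌊(m₁:ℝ) * a / b⌋₊ + m₂ := by
          have := Nat.le_floor h2
          rwa [Nat.floor_add_natCast (by positivity)] at this
        omega
    · exact fun h => h.2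
  rw [hSF, Set.ncard_coe_finset]
  -- card computation in ℕ
  have hcard : F.card = (m₁+1)*(m₂+1) + (∑ j ∈ Icc 1 m₁, ⌊(j:ℝ)*a/b⌋₊)
      + (∑ j ∈ Icc 1 m₂, ⌊(j:ℝ)*b/a⌋₊) := by
    have hsplit : F.card
        = ∑ x ∈ range N, ((range M).filter
            (fun y : ℕ => a * x + b * y ≤ a * m₁ + b * m₂)).card := by
      rw [hF]
      simp only [Finset.card_filter]
      rw [Finset.sum_product]
    rw [hsplit, hN, Finset.sum_range_add]
    -- head columns
    have hhead : ∀ x ∈ range (m₁+1),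
        ((range M).filter (fun y : ℕ => a * x + b * y ≤ a * m₁ + b * m₂)).card
          = ⌊((m₁ - x : ℕ):ℝ) * a / b⌋₊ + (m₂ + 1) := by
      intro x hx
      have hx' : x ≤ m₁ := by simpa [Nat.lt_succ_iff] using mem_range.mp hx
      set t := ((m₁ - x : ℕ):ℝ) * a / b with ht
      have hcast : ((m₁ - x : ℕ):ℝ) = (m₁:ℝ) - x := by
        push_cast [Nat.cast_sub hx']; ring
      have h0 : (0:ℝ) ≤ t := by positivity
      have key : ∀ y : ℕ, (a * x + b * y ≤ a * m₁ + b * m₂) ↔ (y:ℝ) ≤ t + m₂ := by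
        intro y
        have hte : t + (m₂:ℝ) = (a * m₁ + b * m₂ - a * x) / b := by
          rw [ht, hcast]; field_simp; ring
        rw [hte, le_div_iff₀ hb]
        constructor <;> intro h <;> linarith
      have hkey2 : ∀ y : ℕ, (a * x + b * y ≤ a * m₁ + b * m₂) ↔ y < ⌊t⌋₊ + (m₂ + 1) := by
        intro y
        rw [key y, ← Nat.le_floor_iff (by positivity), Nat.floor_add_natCast h0]
        omega
      have hfM : ⌊t⌋₊ + (m₂ + 1) ≤ M := by
        have h1 : t ≤ (m₁:ℝ) * a / b := by
          rw [ht]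
          gcongr
          · exact Nat.cast_le.mpr (Nat.sub_le _ _)
        have := Nat.floor_le_floor h1
        omega
      have he : (range M).filter (fun y : ℕ => a * x + b * y ≤ a * m₁ + b * m₂)
          = range (⌊t⌋₊ + (m₂ + 1)) := by
        ext y
        simp only [mem_filter, mem_range, hkey2]
        omega
      rw [he, card_range]
    rw [Finset.sum_congr rfl hhead]
    -- tail columns
    have htail : ∀ i ∈ range K,
        ((range M).filter
          (fun y : ℕ => a * ((m₁ + 1 + i : ℕ):ℝ) + b * y ≤ a * m₁ + b * m₂)).card
          = m₂ - ⌊((i:ℝ)+1) * a / b⌋₊ := by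
      intro i _
      set t := ((i:ℝ)+1) * a / b with ht
      have h0 : (0:ℝ) ≤ t := by positivity
      have htirr : Irrational t := by
        have : t = ((i+1 : ℕ):ℝ) * (a / b) := by rw [ht]; push_cast; ring
        rw [this]
        exact hirr.natCast_mul (Nat.succ_ne_zero i)
      have htb : t * b = ((i:ℝ)+1) * a := div_mul_cancel₀ _ (ne_of_gt hb)
      have hcond : ∀ y : ℕ,
          (a * ((m₁ + 1 + i : ℕ):ℝ) + b * y ≤ a * m₁ + b * m₂) ↔ y < m₂ - ⌊t⌋₊ := by
        intro y
        constructor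
        · intro h
          have h' : ((i:ℝ)+1) * a + b * y ≤ b * m₂ := by push_cast at h; linarith
          have hty : t + (y:ℝ) ≤ m₂ := by
            have h2 : (t + y) * b ≤ (m₂:ℝ) * b := by rw [add_mul, htb]; linarith
            exact le_of_mul_le_mul_right (by linarith) hb
          have ht0 : (0:ℝ) < t := lt_of_le_of_ne h0 (fun hc => htirr.ne_nat 0 (by simp [← hc]))
          have hym : y < m₂ := by
            by_contra hy
            push_neg at hy
            have : (m₂:ℝ) ≤ y := Nat.cast_le.mpr hy
            linarith
          have hne : t ≠ ((m₂ - y : ℕ):ℝ) := htirr.ne_nat _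
          have hlt : t < ((m₂ - y : ℕ):ℝ) :=
            lt_of_le_of_ne (by rw [Nat.cast_sub hym.le]; linarith) hne
          have := (Nat.floor_lt h0).mpr hlt
          omega
        · intro h
          have h1 : y + ⌊t⌋₊ + 1 ≤ m₂ := by omega
          have h2 : (y:ℝ) + ⌊t⌋₊ + 1 ≤ m₂ := by exact_mod_cast h1
          have h3 : t < ⌊t⌋₊ + 1 := Nat.lt_floor_add_one t
          have h4 : (t + y) * b ≤ (m₂:ℝ) * b := by
            apply mul_le_mul_of_nonneg_right _ hb.le
            linarith
          rw [add_mul, htb] at h4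
          push_cast
          linarith
      have he : (range M).filter
          (fun y : ℕ => a * ((m₁ + 1 + i : ℕ):ℝ) + b * y ≤ a * m₁ + b * m₂)
          = range (m₂ - ⌊t⌋₊) := by
        ext y
        simp only [mem_filter, mem_range, hcond]
        omega
      rw [he, card_range]
    rw [Finset.sum_congr rfl htail, recip a b ha hb hba m₂]
    -- head sum rearrangement
    have hrefl : ∑ x ∈ range (m₁+1), (⌊((m₁ - x : ℕ):ℝ) * a / b⌋₊ + (m₂ + 1))
        = ∑ i ∈ range (m₁+1), (⌊(i:ℝ) * a / b⌋₊ + (m₂ + 1)) := by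
      rw [← Finset.sum_range_reflect (fun i : ℕ => ⌊(i:ℝ) * a / b⌋₊ + (m₂ + 1)) (m₁+1)]
      apply Finset.sum_congr rfl
      intro x hx
      norm_num
    rw [hrefl, Finset.sum_add_distrib, Finset.sum_const, card_range, smul_eq_mul]
    have hins : range (m₁+1) = insert 0 (Icc 1 m₁) := by
      ext i
      simp only [mem_range, mem_insert, mem_Icc]
      omega
    rw [hins, Finset.sum_insert (by simp)]
    simp only [Nat.cast_zero, zero_mul, zero_div, Nat.floor_zero, zero_add]
    ring
  rw [hcard]
  have e1 : ((∑ j ∈ Icc 1 m₁, ⌊(j:ℝ)*a/b⌋₊ : ℕ) : ℤ) = ∑ j ∈ Icc 1 m₁, ⌊(j:ℝ)*a/b⌋ := by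
    push_cast
    exact Finset.sum_congr rfl fun j _ => Int.natCast_floor_eq_floor (by positivity)
  have e2 : ((∑ j ∈ Icc 1 m₂, ⌊(j:ℝ)*b/a⌋₊ : ℕ) : ℤ) = ∑ j ∈ Icc 1 m₂, ⌊(j:ℝ)*b/a⌋ := by
    push_cast
    exact Finset.sum_congr rfl fun j _ => Int.natCast_floor_eq_floor (by positivity)
  rw [Nat.cast_add, Nat.cast_add, e1, e2]
  push_cast
  ring
end

section
/- Let a, b > 0 be real numbers with a/b irrational, let m₁, m₂ be nonnegative integers, and set k = m₁ + m₂ + m₁·m₂ + Σ_{j=1}^{m₁} ⌊j·a/b⌋ + Σ_{j=1}^{m₂} ⌊j·b/a⌋. Then N_k(a,b) = a·m₁ + b·m₂. -/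
open Finset

lemma slice_iff (a b : ℝ) (ha : 0 < a) (hb : 0 < b) (m₁ m₂ m n : ℕ)
    (hm : m₁ < m) (hn : n < m₂) :
    m - (m₁+1) < ⌊((m₂ - n : ℕ):ℝ) * b / a⌋₊ ↔ a*m + b*n ≤ a*m₁ + b*m₂ := by
  rw [Nat.lt_iff_add_one_le]
  have h1 : m - (m₁+1) + 1 = m - m₁ := by omega
  rw [h1, Nat.le_floor_iff (by positivity), le_div_iff₀ ha]
  rw [Nat.cast_sub hm.le, Nat.cast_sub hn.le]
  constructor <;> intro h <;> nlinarith

noncomputable def Bfin (a b : ℝ) (m₁ m₂ : ℕ) : Finset (ℕ × ℕ) := (Finset.range m₂).biUnion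
    (fun n => (Finset.range ⌊((m₂ - n : ℕ):ℝ)*b/a⌋₊).image (fun s => (m₁+1+s, n)))

lemma mem_Bfin (a b : ℝ) (m₁ m₂ : ℕ) (p : ℕ × ℕ) :
    p ∈ Bfin a b m₁ m₂ ↔ m₁ < p.1 ∧ p.2 < m₂ ∧ p.1 - (m₁+1) < ⌊((m₂ - p.2 : ℕ):ℝ)*b/a⌋₊ := by
  simp only [Bfin, mem_biUnion, mem_image, mem_range]
  constructor
  · rintro ⟨n, hn, s, hs, rfl⟩
    exact ⟨by omega, hn, by simpa using hs⟩
  · rintro ⟨h1, h2, h3⟩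
    exact ⟨p.2, h2, p.1 - (m₁+1), h3, by ext <;> simp <;> omega⟩

lemma card_Bfin (a b : ℝ) (m₁ m₂ : ℕ) :
    (Bfin a b m₁ m₂).card = ∑ j ∈ Finset.Icc 1 m₂, ⌊(j : ℝ) * b / a⌋₊ := by
  rw [Bfin, card_biUnion]
  · rw [Finset.sum_congr rfl (fun n hn => Finset.card_image_of_injective _
      (fun x y hxy => by simpa using hxy))]
    simp only [card_range]
    refine Finset.sum_nbij' (fun n => m₂ - n) (fun j => m₂ - j) ?_ ?_ ?_ ?_ ?_
    · intro n hn; simp only [mem_range] at hn; simp only [mem_Icc]; omega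
    · intro j hj; simp only [mem_Icc] at hj; simp only [mem_range]; omega
    · intro n hn; simp only [mem_range] at hn; show m₂ - (m₂ - n) = n; omega
    · intro j hj; simp only [mem_Icc] at hj; show m₂ - (m₂ - j) = j; omega
    · intro n hn; rfl
  · intro n₁ h1 n₂ h2 hne
    simp only [disjoint_left, mem_image, mem_range]
    rintro p ⟨s, hs, rfl⟩ ⟨t, ht, hpt⟩
    simp only [Prod.mk.injEq] at hpt
    exact hne hpt.2.symm

section main
variable (a b : ℝ) (m₁ m₂ : ℕ)

-- main set equality and cardinality
lemma main_count (ha : 0 < a) (hb : 0 < b) :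
    ∃ F : Finset (ℕ × ℕ),
      (↑F : Set (ℕ × ℕ)) = {p : ℕ × ℕ | a * p.1 + b * p.2 ≤ a * m₁ + b * m₂} ∧
      (m₁, m₂) ∈ F ∧
      F.card = (m₁+1) * (m₂+1) + (∑ j ∈ Finset.Icc 1 m₂, ⌊(j : ℝ) * b / a⌋₊)
        + (∑ j ∈ Finset.Icc 1 m₁, ⌊(j : ℝ) * a / b⌋₊) := by
  classical
  set A : Finset (ℕ×ℕ) := (Finset.range (m₁+1)) ×ˢ (Finset.range (m₂+1)) with hA
  have memA : ∀ p : ℕ×ℕ, p ∈ A ↔ p.1 ≤ m₁ ∧ p.2 ≤ m₂ := by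
    intro p; simp [hA, Nat.lt_succ_iff]
  set B : Finset (ℕ×ℕ) := Bfin a b m₁ m₂ with hB
  set C : Finset (ℕ×ℕ) := (Bfin b a m₂ m₁).image Prod.swap with hC
  have memC : ∀ p : ℕ×ℕ, p ∈ C ↔
      m₂ < p.2 ∧ p.1 < m₁ ∧ p.2 - (m₂+1) < ⌊((m₁ - p.1 : ℕ):ℝ)*a/b⌋₊ := by
    intro p
    rw [hC, Finset.mem_image]
    constructor
    · rintro ⟨q, hq, rfl⟩
      rw [mem_Bfin] at hq
      exact ⟨hq.1, hq.2.1, hq.2.2⟩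
    · rintro ⟨h1, h2, h3⟩
      exact ⟨p.swap, (mem_Bfin b a m₂ m₁ p.swap).2 ⟨h1, h2, h3⟩, Prod.swap_swap p⟩
  refine ⟨A ∪ B ∪ C, ?_, ?_, ?_⟩
  · ext p
    simp only [Finset.coe_union, Set.mem_union, Finset.mem_coe, Set.mem_setOf_eq,
      memA, hB, mem_Bfin, memC]
    constructor
    · rintro ((⟨h1, h2⟩ | ⟨h1, h2, h3⟩) | ⟨h1, h2, h3⟩)
      · have c1 : (p.1 : ℝ) ≤ m₁ := Nat.cast_le.2 h1
        have c2 : (p.2 : ℝ) ≤ m₂ := Nat.cast_le.2 h2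
        nlinarith
      · exact (slice_iff a b ha hb m₁ m₂ p.1 p.2 h1 h2).1 h3
      · have := (slice_iff b a hb ha m₂ m₁ p.2 p.1 h1 h2).1 h3
        linarith
    · intro hp
      rcases le_or_gt p.1 m₁ with h1 | h1 <;> rcases le_or_gt p.2 m₂ with h2 | h2
      · exact Or.inl (Or.inl ⟨h1, h2⟩)
      · have hlt : p.1 < m₁ := by
          by_contra hcon
          push_neg at hcon
          have c1 : (m₁ : ℝ) ≤ p.1 := Nat.cast_le.2 hcon
          have c2 : (m₂ : ℝ) < p.2 := Nat.cast_lt.2 h2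
          nlinarith
        exact Or.inr ⟨h2, hlt, (slice_iff b a hb ha m₂ m₁ p.2 p.1 h2 hlt).2 (by linarith)⟩
      · have hlt : p.2 < m₂ := by
          by_contra hcon
          push_neg at hcon
          have c1 : (m₂ : ℝ) ≤ p.2 := Nat.cast_le.2 hcon
          have c2 : (m₁ : ℝ) < p.1 := Nat.cast_lt.2 h1
          nlinarith
        exact Or.inl (Or.inr ⟨h1, hlt, (slice_iff a b ha hb m₁ m₂ p.1 p.2 h1 hlt).2 hp⟩)
      · exfalso
        have c1 : (m₁ : ℝ) < p.1 := Nat.cast_lt.2 h1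
        have c2 : (m₂ : ℝ) < p.2 := Nat.cast_lt.2 h2
        nlinarith
  · simp [memA]
  · have dAB : Disjoint A B := by
      simp only [disjoint_left]
      intro p hp hp'
      rw [memA] at hp; rw [hB, mem_Bfin] at hp'
      omega
    have dAC : Disjoint A C := by
      simp only [disjoint_left]
      intro p hp hp'
      rw [memA] at hp; rw [memC] at hp'
      omega
    have dBC : Disjoint B C := by
      simp only [disjoint_left]
      intro p hp hp'
      rw [hB, mem_Bfin] at hp; rw [memC] at hp'
      omega
    rw [Finset.card_union_of_disjoint (by
      simp only [Finset.disjoint_union_left]; exact ⟨dAC, dBC⟩),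
      Finset.card_union_of_disjoint dAB]
    have cA : A.card = (m₁+1) * (m₂+1) := by simp [hA]
    have cB : B.card = ∑ j ∈ Finset.Icc 1 m₂, ⌊(j : ℝ) * b / a⌋₊ := card_Bfin a b m₁ m₂
    have cC : C.card = ∑ j ∈ Finset.Icc 1 m₁, ⌊(j : ℝ) * a / b⌋₊ := by
      rw [hC, Finset.card_image_of_injective _ Prod.swap_injective, card_Bfin]
    rw [cA, cB, cC]
end main


theorem stmt_2 (a b : ℝ) (ha : 0 < a) (hb : 0 < b) (hirr : Irrational (a / b))
    (m₁ m₂ k : ℕ)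
    (hk : k = m₁ + m₂ + m₁ * m₂ +
        (∑ j ∈ Finset.Icc 1 m₁, ⌊(j : ℝ) * a / b⌋₊) +
        (∑ j ∈ Finset.Icc 1 m₂, ⌊(j : ℝ) * b / a⌋₊)) :
    ellN a b k = a * m₁ + b * m₂ := by
  obtain ⟨F, hFS, hmem, hcard⟩ := main_count a b m₁ m₂ ha hb
  have hcard' : F.card = k + 1 := by rw [hcard, hk]; ring
  have hncard : ({p : ℕ × ℕ | a * p.1 + b * p.2 ≤ a * m₁ + b * m₂}).ncard = k + 1 := by
    rw [← hFS, Set.ncard_coe_finset, hcard']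
  have hL0mem : (a * m₁ + b * m₂) ∈
      {L : ℝ | 0 ≤ L ∧ k + 1 ≤ {p : ℕ × ℕ | a * p.1 + b * p.2 ≤ L}.ncard} :=
    ⟨by positivity, by rw [hncard]⟩
  have hlb : ∀ L ∈ {L : ℝ | 0 ≤ L ∧ k + 1 ≤ {p : ℕ × ℕ | a * p.1 + b * p.2 ≤ L}.ncard},
      a * m₁ + b * m₂ ≤ L := by
    rintro L ⟨hL0le, hLcard⟩
    by_contra hcon
    push_neg at hcon
    have hsub : {p : ℕ × ℕ | a * p.1 + b * p.2 ≤ L} ⊆ ↑(F.erase (m₁, m₂)) := by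
      intro p hp
      simp only [Set.mem_setOf_eq] at hp
      simp only [Finset.coe_erase, Set.mem_diff, Set.mem_singleton_iff, Finset.mem_coe]
      refine ⟨?_, ?_⟩
      · rw [← Finset.mem_coe, hFS]
        exact le_trans hp hcon.le
      · rintro rfl
        simp only at hp
        linarith
    have hle := Set.ncard_le_ncard hsub (Finset.finite_toSet _)
    rw [Set.ncard_coe_finset, Finset.card_erase_of_mem hmem, hcard'] at hle
    omega
  exact le_antisymm (csInf_le ⟨0, fun x hx => hx.1⟩ hL0mem) (le_csInf ⟨_, hL0mem⟩ hlb)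
end

section
/- For all real numbers a, b > 0, the limit as k → ∞ of N_k(a,b)²/k exists and equals 2ab. -/
/-!
The number of `(m, n) ∈ ℕ²` with `a m + b n ≤ L` is `L² / (2ab) + O(L)`. In the box
`[0, ⌊L/a⌋] × [0, ⌊L/b⌋]` with far corner `q`, the point reflection `p ↦ q - p` maps the
complement of this triangle into the triangle, and maps the triangle into the complement of the
triangle for `L - a - b`; comparing with the `≈ L² / (ab)` points of the box gives both bounds.
Inverting them, `N_k(a, b) = √(2abk) + O(1)`.
-/

open Filter

open Finset Topology

theorem tendsto_sq_div_of_sqrt_sub_le_of_le_sqrt {u : ℕ → ℝ} {A C : ℝ} (hA : 0 ≤ A)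
    (hlow : ∀ k : ℕ, √(A * k) - C ≤ u k) (hup : ∀ k : ℕ, u k ≤ √(A * (k + 1))) :
    Tendsto (fun k => u k ^ 2 / k) atTop (𝓝 A) := by
  have hsqrt : Tendsto (fun k : ℕ => √(k : ℝ)) atTop atTop :=
    Real.tendsto_sqrt_atTop.comp tendsto_natCast_atTop_atTop
  have hu : Tendsto (fun k : ℕ => u k / √k) atTop (𝓝 √A) := by
    refine tendsto_of_tendsto_of_tendsto_of_le_of_le' (g := fun k : ℕ => √A - C / √(k : ℝ))
      (h := fun k : ℕ => √(A * (1 + 1 / (k : ℝ)))) ?_ ?_ ?_ ?_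
    · simpa using tendsto_const_nhds.sub (tendsto_const_nhds.div_atTop hsqrt)
    · have h : Tendsto (fun k : ℕ => A * (1 + 1 / (k : ℝ))) atTop (𝓝 A) := by
        simpa using (tendsto_one_div_atTop_nhds_zero_nat (𝕜 := ℝ)).const_add 1 |>.const_mul A
      exact (Real.continuous_sqrt.tendsto A).comp h
    · filter_upwards [eventually_gt_atTop 0] with k hk
      have hk' : 0 < √(k : ℝ) := Real.sqrt_pos.2 (Nat.cast_pos.2 hk)
      rw [le_div_iff₀ hk', sub_mul, div_mul_cancel₀ _ hk'.ne', ← Real.sqrt_mul hA]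
      exact hlow k
    · filter_upwards [eventually_gt_atTop 0] with k hk
      have hk' : (0 : ℝ) < k := Nat.cast_pos.2 hk
      rw [show A * (1 + 1 / k) = A * (k + 1) / k by field_simp, Real.sqrt_div' _ hk'.le]
      exact div_le_div_of_nonneg_right (hup k) (Real.sqrt_nonneg _)
  convert hu.pow 2 using 1
  · funext k
    rw [div_pow, Real.sq_sqrt k.cast_nonneg]
  · rw [Real.sq_sqrt hA]

def latticeWeight (a b : ℝ) (p : ℕ × ℕ) : ℝ := a * p.1 + b * p.2

noncomputable def latticeCorner (a b L : ℝ) : ℕ × ℕ := (⌊L / a⌋₊, ⌊L / b⌋₊)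

noncomputable def latticeTriangle (a b L : ℝ) : Finset (ℕ × ℕ) :=
  {p ∈ Iic (latticeCorner a b L) | latticeWeight a b p ≤ L}

section
variable {a b L : ℝ}

lemma latticeWeight_tsub {p q : ℕ × ℕ} (h : p ≤ q) :
    latticeWeight a b (q - p) = latticeWeight a b q - latticeWeight a b p := by
  simp only [latticeWeight, Prod.fst_sub, Prod.snd_sub, Nat.cast_sub h.1, Nat.cast_sub h.2]
  ring

lemma mul_floor_div_le (ha : 0 < a) (hL : 0 ≤ L) : a * ⌊L / a⌋₊ ≤ L :=
  (le_div_iff₀' ha).1 (Nat.floor_le (div_nonneg hL ha.le))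

lemma lt_mul_floor_div_add_one (ha : 0 < a) : L < a * (⌊L / a⌋₊ + 1) :=
  (div_lt_iff₀' ha).1 (Nat.lt_floor_add_one _)

lemma le_latticeCorner_of_latticeWeight_le (ha : 0 < a) (hb : 0 < b) {p : ℕ × ℕ}
    (hp : latticeWeight a b p ≤ L) :
    p ≤ latticeCorner a b L := by
  have h1 : (0 : ℝ) ≤ a * p.1 := by positivity
  have h2 : (0 : ℝ) ≤ b * p.2 := by positivity
  refine ⟨Nat.le_floor ?_, Nat.le_floor ?_⟩
  · rw [le_div_iff₀' ha]; unfold latticeWeight at hp; linarith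
  · rw [le_div_iff₀' hb]; unfold latticeWeight at hp; linarith

lemma mem_latticeTriangle (ha : 0 < a) (hb : 0 < b) {p : ℕ × ℕ} :
    p ∈ latticeTriangle a b L ↔ latticeWeight a b p ≤ L := by
  rw [latticeTriangle, mem_filter, mem_Iic]
  exact and_iff_right_of_imp (le_latticeCorner_of_latticeWeight_le ha hb)

lemma ncard_setOf_le_eq_card_latticeTriangle (ha : 0 < a) (hb : 0 < b) :
    {p : ℕ × ℕ | a * p.1 + b * p.2 ≤ L}.ncard = #(latticeTriangle a b L) := by
  rw [← Set.ncard_coe_finset]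
  congr 1
  ext p
  exact (mem_latticeTriangle ha hb).symm

lemma card_Iic_latticeCorner :
    (#(Iic (latticeCorner a b L)) : ℝ) = (⌊L / a⌋₊ + 1) * (⌊L / b⌋₊ + 1) := by
  simp [Finset.card_Iic_prod, latticeCorner]

lemma card_Iic_latticeCorner_le (ha : 0 < a) (hb : 0 < b) (hL : 0 ≤ L) :
    #(Iic (latticeCorner a b L)) ≤ 2 * #(latticeTriangle a b L) := by
  set q := latticeCorner a b L
  have hq : latticeWeight a b q ≤ 2 * L := by
    have := mul_floor_div_le ha hL; have := mul_floor_div_le hb hL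
    simp only [latticeWeight, q, latticeCorner]; linarith
  have hcover : Iic q ⊆ latticeTriangle a b L ∪ (latticeTriangle a b L).image (q - ·) := by
    intro p hp
    rw [mem_Iic] at hp
    rw [mem_union, mem_image, mem_latticeTriangle ha hb]
    refine (le_or_gt (latticeWeight a b p) L).imp id
      fun hpL => ⟨q - p, ?_, tsub_tsub_cancel_of_le hp⟩
    rw [mem_latticeTriangle ha hb, latticeWeight_tsub hp]
    linarith
  calc #(Iic q) ≤ #(latticeTriangle a b L ∪ (latticeTriangle a b L).image (q - ·)) :=
        card_le_card hcover
    _ ≤ #(latticeTriangle a b L) + #((latticeTriangle a b L).image (q - ·)) := card_union_le _ _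
    _ ≤ 2 * #(latticeTriangle a b L) := by
        linarith [card_image_le (s := latticeTriangle a b L) (f := (q - ·))]

lemma card_latticeTriangle_add_card_le (ha : 0 < a) (hb : 0 < b) :
    #(latticeTriangle a b L) + #(latticeTriangle a b (L - a - b)) ≤
      #(Iic (latticeCorner a b L)) := by
  set q := latticeCorner a b L
  have hq : 2 * L - a - b < latticeWeight a b q := by
    have := lt_mul_floor_div_add_one (L := L) ha; have := lt_mul_floor_div_add_one (L := L) hb
    simp only [latticeWeight, q, latticeCorner]; linarith
  have hsub :
      (latticeTriangle a b L).image (q - ·) ∪ latticeTriangle a b (L - a - b) ⊆ Iic q := by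
    refine union_subset (fun r hr => ?_) fun r hr => ?_
    · obtain ⟨p, -, rfl⟩ := mem_image.1 hr
      exact mem_Iic.2 tsub_le_self
    · rw [mem_latticeTriangle ha hb] at hr
      exact mem_Iic.2 (le_latticeCorner_of_latticeWeight_le ha hb (by linarith))
  have hdisj :
      Disjoint ((latticeTriangle a b L).image (q - ·)) (latticeTriangle a b (L - a - b)) := by
    refine disjoint_left.2 fun r hr hr' => ?_
    obtain ⟨p, hp, rfl⟩ := mem_image.1 hr
    rw [mem_latticeTriangle ha hb] at hp hr'
    rw [latticeWeight_tsub (le_latticeCorner_of_latticeWeight_le ha hb hp)] at hr'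
    linarith
  have hinj : Set.InjOn (q - ·) (latticeTriangle a b L) := fun p hp p' hp' h =>
    tsub_inj_right (mem_Iic.1 (mem_filter.1 hp).1) (mem_Iic.1 (mem_filter.1 hp').1) h
  calc #(latticeTriangle a b L) + #(latticeTriangle a b (L - a - b))
      = #((latticeTriangle a b L).image (q - ·) ∪ latticeTriangle a b (L - a - b)) := by
        rw [card_union_of_disjoint hdisj, card_image_of_injOn hinj]
    _ ≤ #(Iic q) := card_le_card hsub

lemma sq_div_le_card_latticeTriangle (ha : 0 < a) (hb : 0 < b) (hL : 0 ≤ L) :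
    L ^ 2 / (2 * a * b) ≤ #(latticeTriangle a b L) := by
  have hbox : L / a * (L / b) ≤ (⌊L / a⌋₊ + 1) * (⌊L / b⌋₊ + 1) :=
    mul_le_mul (Nat.lt_floor_add_one _).le (Nat.lt_floor_add_one _).le (by positivity)
      (by positivity)
  have hcard : (#(Iic (latticeCorner a b L)) : ℝ) ≤ 2 * #(latticeTriangle a b L) := by
    exact_mod_cast card_Iic_latticeCorner_le ha hb hL
  rw [card_Iic_latticeCorner] at hcard
  calc L ^ 2 / (2 * a * b) = L / a * (L / b) / 2 := by field_simp
    _ ≤ #(latticeTriangle a b L) := by linarith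

lemma card_latticeTriangle_le (ha : 0 < a) (hb : 0 < b) (hL : 0 ≤ L) :
    #(latticeTriangle a b L) ≤ (L + 2 * (a + b)) ^ 2 / (2 * a * b) := by
  have hbox : a * (⌊L / a⌋₊ + 1) * (b * (⌊L / b⌋₊ + 1)) ≤ (L + a) * (L + b) := by
    have := mul_floor_div_le ha hL; have := mul_floor_div_le hb hL
    apply mul_le_mul <;> first | positivity | linarith
  have hcard : (#(latticeTriangle a b L) + #(latticeTriangle a b (L - a - b)) : ℝ) * (a * b)
      ≤ (L + a) * (L + b) := by
    have := card_latticeTriangle_add_card_le (L := L) ha hb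
    have : (#(latticeTriangle a b L) + #(latticeTriangle a b (L - a - b)) : ℝ) ≤
        #(Iic (latticeCorner a b L)) := by exact_mod_cast this
    rw [card_Iic_latticeCorner] at this
    nlinarith [mul_pos ha hb]
  rw [le_div_iff₀ (by positivity)]
  rcases le_or_gt (a + b) L with hab | hab
  · have := sq_div_le_card_latticeTriangle ha hb (L := L - a - b) (by linarith)
    rw [div_le_iff₀ (by positivity)] at this
    nlinarith
  · have : (0 : ℝ) ≤ #(latticeTriangle a b (L - a - b)) * (a * b) := by positivity
    nlinarith
lemma sqrt_mem_setOf_le_ncard (ha : 0 < a) (hb : 0 < b) (k : ℕ) :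
    √(2 * a * b * (k + 1)) ∈
      {L : ℝ | 0 ≤ L ∧ k + 1 ≤ {p : ℕ × ℕ | a * p.1 + b * p.2 ≤ L}.ncard} := by
  refine ⟨Real.sqrt_nonneg _, ?_⟩
  have h := sq_div_le_card_latticeTriangle ha hb (Real.sqrt_nonneg (2 * a * b * (k + 1)))
  rw [Real.sq_sqrt (by positivity), mul_div_cancel_left₀ _ (by positivity)] at h
  rw [ncard_setOf_le_eq_card_latticeTriangle ha hb]
  exact_mod_cast h

lemma ellN_le_sqrt (ha : 0 < a) (hb : 0 < b) (k : ℕ) : ellN a b k ≤ √(2 * a * b * (k + 1)) :=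
  csInf_le ⟨0, fun _ hL => hL.1⟩ (sqrt_mem_setOf_le_ncard ha hb k)

lemma sqrt_sub_le_ellN (ha : 0 < a) (hb : 0 < b) (k : ℕ) :
    √(2 * a * b * k) - 2 * (a + b) ≤ ellN a b k := by
  refine le_csInf ⟨_, sqrt_mem_setOf_le_ncard ha hb k⟩ fun L ⟨hL, hk⟩ => ?_
  rw [ncard_setOf_le_eq_card_latticeTriangle ha hb] at hk
  have hk' : (k + 1 : ℝ) ≤ (L + 2 * (a + b)) ^ 2 / (2 * a * b) :=
    calc (k + 1 : ℝ) ≤ #(latticeTriangle a b L) := by exact_mod_cast hk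
      _ ≤ _ := card_latticeTriangle_le ha hb hL
  rw [le_div_iff₀ (by positivity)] at hk'
  rw [sub_le_iff_le_add, Real.sqrt_le_left (by positivity)]
  nlinarith [mul_pos ha hb]

end

theorem stmt_4 (a b : ℝ) (ha : 0 < a) (hb : 0 < b) :
    Tendsto (fun k : ℕ => (ellN a b k) ^ 2 / k) atTop (nhds (2 * a * b)) :=
  tendsto_sq_div_of_sqrt_sub_le_of_le_sqrt (by positivity) (sqrt_sub_le_ellN ha hb)
    (ellN_le_sqrt ha hb)
end

section
/- Let m ≥ 1 be an integer and V₁, …, V_m > 0 real numbers, and for each i = 1, …, m let c^{(i)} : ℕ → ℝ be a sequence with lim_{k→∞} c^{(i)}_k/√k = 2√(V_i). Define c : ℕ → ℝ by c_k = max{ Σ_{i=1}^m c^{(i)}_{k_i} : k₁, …, k_m ∈ ℕ, k₁ + ⋯ + k_m = k }. Then lim_{k→∞} c_k/√k = 2√(V₁ + ⋯ + V_m). -/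
/-!
Write `a i = 2 √(V i)`, so that `2 √(∑ V i) = √(∑ a i ^ 2)`. From above: each `c⁽ⁱ⁾ₖ` is at most
`(a i + ε) √k + Cᵢ`, and Cauchy–Schwarz gives `∑ (a i + ε) √(kᵢ) ≤ √(∑ (a i + ε) ^ 2) √k`
whenever `∑ kᵢ = k`. From below: the split `kᵢ ≈ k a i ^ 2 / ∑ a j ^ 2`, the equality case of
Cauchy–Schwarz, gives `∑ c⁽ⁱ⁾_{kᵢ} / √k → ∑ a i ^ 2 / √(∑ a j ^ 2) = √(∑ a j ^ 2)`.
-/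

open Filter Finset Topology

theorem exists_le_mul_sqrt_add {f : ℕ → ℝ} {a b : ℝ}
    (hf : Tendsto (fun k : ℕ => f k / √k) atTop (𝓝 a)) (hab : a < b) :
    ∃ C, ∀ k : ℕ, f k ≤ b * √k + C := by
  have hev : ∀ᶠ k : ℕ in atTop, f k - b * √k ≤ 0 := by
    filter_upwards [hf.eventually (eventually_lt_nhds hab), eventually_gt_atTop 0]
      with k hlt hk
    rw [div_lt_iff₀ (Real.sqrt_pos.2 (by exact_mod_cast hk))] at hlt
    linarith
  obtain ⟨C, hC⟩ := (isBoundedUnder_of_eventually_le hev).bddAbove_range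
  exact ⟨C, fun k => by linarith [hC (Set.mem_range_self k)]⟩

theorem eventually_div_sqrt_lt {g : ℕ → ℝ} {B b C : ℝ} (hBb : B < b)
    (hg : ∀ k : ℕ, g k ≤ B * √k + C) : ∀ᶠ k : ℕ in atTop, g k / √k < b := by
  have hC : Tendsto (fun k : ℕ => C / √k) atTop (𝓝 0) :=
    tendsto_const_nhds.div_atTop (Real.tendsto_sqrt_atTop.comp tendsto_natCast_atTop_atTop)
  filter_upwards [hC.eventually (eventually_lt_nhds (sub_pos.2 hBb)), eventually_gt_atTop 0]
    with k hCk hk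
  have hsk : 0 < √(k : ℝ) := Real.sqrt_pos.2 (by exact_mod_cast hk)
  calc g k / √k ≤ B + C / √k := by
        rw [div_le_iff₀ hsk, add_mul, div_mul_cancel₀ _ hsk.ne']
        linarith [hg k]
    _ < b := by linarith

theorem tendsto_comp_div_sqrt {f : ℕ → ℝ} {a w : ℝ} {n : ℕ → ℕ}
    (hf : Tendsto (fun k : ℕ => f k / √k) atTop (𝓝 a))
    (hn : Tendsto (fun k : ℕ => (n k : ℝ) / k) atTop (𝓝 w)) (hw : 0 < w) :
    Tendsto (fun k : ℕ => f (n k) / √k) atTop (𝓝 (a * √w)) := by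
  have hn_top : Tendsto n atTop atTop := by
    rw [← tendsto_natCast_atTop_iff (R := ℝ)]
    refine (tendsto_natCast_atTop_atTop.atTop_mul_pos hw hn).congr' ?_
    filter_upwards [eventually_gt_atTop 0] with k hk
    field_simp
  refine ((hf.comp hn_top).mul ((Real.continuous_sqrt.tendsto w).comp hn)).congr' ?_
  filter_upwards [hn_top.eventually_gt_atTop 0] with k hnk
  have : 0 < √(n k : ℝ) := Real.sqrt_pos.2 (by exact_mod_cast hnk)
  simp only [Function.comp_apply, Real.sqrt_div (Nat.cast_nonneg _)]
  field_simp

theorem exists_partition_tendsto_div {ι : Type*} [Fintype ι] {w : ι → ℝ}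
    (hw : ∀ i, 0 ≤ w i) (hw1 : ∑ i, w i = 1) :
    ∃ ks : ℕ → ι → ℕ, (∀ k, ∑ i, ks k i = k) ∧
      ∀ i, Tendsto (fun k : ℕ => (ks k i : ℝ) / k) atTop (𝓝 (w i)) := by
  classical
  obtain ⟨i₀⟩ : Nonempty ι := by
    by_contra h
    rw [not_nonempty_iff] at h
    simp at hw1
  have hfl (i : ι) : Tendsto (fun k : ℕ => (⌊w i * k⌋₊ : ℝ) / k) atTop (𝓝 (w i)) :=
    (tendsto_nat_floor_mul_div_atTop (hw i)).comp tendsto_natCast_atTop_atTop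
  set rest : ℕ → ℕ := fun k => ∑ i ∈ univ.erase i₀, ⌊w i * k⌋₊
  have hrest : ∀ k, rest k ≤ k := by
    intro k
    have : (rest k : ℝ) ≤ k := calc
      (rest k : ℝ) ≤ ∑ i ∈ univ.erase i₀, w i * k := by
          push_cast [rest]
          exact sum_le_sum fun i _ => Nat.floor_le (mul_nonneg (hw i) k.cast_nonneg)
      _ ≤ ∑ i, w i * k := sum_le_sum_of_subset_of_nonneg (erase_subset _ _)
          fun i _ _ => mul_nonneg (hw i) k.cast_nonneg
      _ = k := by rw [← sum_mul, hw1, one_mul]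
    exact_mod_cast this
  refine ⟨fun k i => if i = i₀ then k - rest k else ⌊w i * k⌋₊,
    fun k => ?_, fun i => ?_⟩
  · dsimp only
    rw [← add_sum_erase _ _ (mem_univ i₀), if_pos rfl,
      sum_congr rfl fun i hi => if_neg (ne_of_mem_erase hi)]
    exact Nat.sub_add_cancel (hrest k)
  by_cases hi : i = i₀
  · subst hi
    have hlim : Tendsto (fun k : ℕ => 1 - (rest k : ℝ) / k) atTop
        (𝓝 (1 - ∑ j ∈ univ.erase i, w j)) := by
      refine tendsto_const_nhds.sub ?_
      simp only [rest, Nat.cast_sum, sum_div]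
      exact tendsto_finsetSum _ fun j _ => hfl j
    have hwi : 1 - ∑ j ∈ univ.erase i, w j = w i := by
      rw [← hw1, ← add_sum_erase _ _ (mem_univ i), add_sub_cancel_right]
    rw [hwi] at hlim
    refine hlim.congr' ?_
    filter_upwards [eventually_gt_atTop 0] with k hk
    rw [if_pos rfl, Nat.cast_sub (hrest k), sub_div, div_self (by positivity)]
  · simpa [hi] using hfl i

noncomputable def supConv {ι : Type*} [Fintype ι] (f : ι → ℕ → ℝ) (k : ℕ) : ℝ :=
  sSup {S : ℝ | ∃ ks : ι → ℕ, ∑ i, ks i = k ∧ S = ∑ i, f i (ks i)}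

section SupConv

variable {ι : Type*} [Fintype ι] {f : ι → ℕ → ℝ} {a : ι → ℝ}

theorem exists_sum_le_sqrt_sum_sq_mul_sqrt_add {b : ι → ℝ}
    (hf : ∀ i, Tendsto (fun k : ℕ => f i k / √k) atTop (𝓝 (a i)))
    (hab : ∀ i, a i < b i) :
    ∃ C, ∀ ks : ι → ℕ,
      ∑ i, f i (ks i) ≤ √(∑ i, b i ^ 2) * √(∑ i, ks i : ℕ) + C := by
  choose C hC using fun i => exists_le_mul_sqrt_add (hf i) (hab i)
  refine ⟨∑ i, C i, fun ks => ?_⟩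
  have hcs := Real.sum_mul_le_sqrt_mul_sqrt univ b fun i => √(ks i : ℝ)
  simp only [Real.sq_sqrt (Nat.cast_nonneg _)] at hcs
  calc ∑ i, f i (ks i) ≤ ∑ i, (b i * √(ks i : ℝ) + C i) :=
        sum_le_sum fun i _ => hC i (ks i)
    _ = ∑ i, b i * √(ks i : ℝ) + ∑ i, C i := sum_add_distrib
    _ ≤ _ := by push_cast; linarith

theorem sum_le_supConv (hf : ∀ i, Tendsto (fun k : ℕ => f i k / √k) atTop (𝓝 (a i)))
    (ks : ι → ℕ) : ∑ i, f i (ks i) ≤ supConv f (∑ i, ks i) := by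
  obtain ⟨C, hC⟩ := exists_sum_le_sqrt_sum_sq_mul_sqrt_add hf fun i => lt_add_one (a i)
  refine le_csSup ⟨√(∑ i, (a i + 1) ^ 2) * √(∑ i, ks i : ℕ) + C, ?_⟩
    ⟨ks, rfl, rfl⟩
  rintro S ⟨ks', hks', rfl⟩
  simpa [hks'] using hC ks'

theorem supConv_le [Nonempty ι] {k : ℕ} {M : ℝ}
    (h : ∀ ks : ι → ℕ, ∑ i, ks i = k → ∑ i, f i (ks i) ≤ M) : supConv f k ≤ M := by
  classical
  refine csSup_le ⟨_, Pi.single (Classical.arbitrary ι) k, ?_, rfl⟩ ?_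
  · simp
  · rintro S ⟨ks, hks, rfl⟩
    exact h ks hks

theorem eventually_supConv_div_sqrt_lt [Nonempty ι]
    (hf : ∀ i, Tendsto (fun k : ℕ => f i k / √k) atTop (𝓝 (a i)))
    {b : ℝ} (hb : √(∑ i, a i ^ 2) < b) : ∀ᶠ k : ℕ in atTop, supConv f k / √k < b := by
  have hcont : Tendsto (fun ε : ℝ => √(∑ i, (a i + ε) ^ 2)) (𝓝[>] 0)
      (𝓝 √(∑ i, a i ^ 2)) := by
    have : Continuous fun ε : ℝ => √(∑ i, (a i + ε) ^ 2) := by fun_prop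
    simpa using (this.tendsto 0).mono_left nhdsWithin_le_nhds
  obtain ⟨ε, hεb, hε⟩ :=
    ((hcont.eventually (eventually_lt_nhds hb)).and self_mem_nhdsWithin).exists
  obtain ⟨C, hC⟩ :=
    exists_sum_le_sqrt_sum_sq_mul_sqrt_add hf fun i => lt_add_of_pos_right (a i) hε
  exact eventually_div_sqrt_lt hεb fun k => supConv_le fun ks hks => by simpa [hks] using hC ks

theorem tendsto_supConv_div_sqrt [Nonempty ι]
    (hf : ∀ i, Tendsto (fun k : ℕ => f i k / √k) atTop (𝓝 (a i))) (ha : ∀ i, 0 < a i) :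
    Tendsto (fun k : ℕ => supConv f k / √k) atTop (𝓝 √(∑ i, a i ^ 2)) := by
  set A := ∑ i, a i ^ 2
  have hA : 0 < A := sum_pos (fun i _ => pow_pos (ha i) 2) univ_nonempty
  obtain ⟨ks, hks, hlim⟩ := exists_partition_tendsto_div (w := fun i => a i ^ 2 / A)
    (fun i => by positivity) (by rw [← sum_div, div_self hA.ne'])
  have hsplit : Tendsto (fun k : ℕ => (∑ i, f i (ks k i)) / √k) atTop (𝓝 √A) := by
    have hval : ∑ i, a i * √(a i ^ 2 / A) = √A := by
      simp_rw [Real.sqrt_div' _ hA.le, Real.sqrt_sq (ha _).le, ← mul_div_assoc, ← sq,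
        ← sum_div]
      exact Real.div_sqrt
    rw [← hval]
    simp_rw [sum_div]
    exact tendsto_finsetSum univ fun i _ =>
      tendsto_comp_div_sqrt (hf i) (hlim i) (div_pos (pow_pos (ha i) 2) hA)
  refine tendsto_order.2 ⟨fun b hb => ?_, fun b hb => eventually_supConv_div_sqrt_lt hf hb⟩
  filter_upwards [hsplit.eventually (eventually_gt_nhds hb)] with k hbk
  refine hbk.trans_le (div_le_div_of_nonneg_right ?_ (Real.sqrt_nonneg _))
  simpa [hks k] using sum_le_supConv hf (ks k)

end SupConv

theorem stmt_6 (m : ℕ) (hm : 1 ≤ m) (V : Fin m → ℝ) (hV : ∀ i, 0 < V i)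
    (cs : Fin m → ℕ → ℝ)
    (hcs : ∀ i, Tendsto (fun k : ℕ => cs i k / Real.sqrt k) atTop
        (nhds (2 * Real.sqrt (V i))))
    (c : ℕ → ℝ)
    (hc : ∀ k : ℕ, c k = sSup {S : ℝ | ∃ ks : Fin m → ℕ, (∑ i, ks i) = k ∧
        S = ∑ i, cs i (ks i)}) :
    Tendsto (fun k : ℕ => c k / Real.sqrt k) atTop
      (nhds (2 * Real.sqrt (∑ i, V i))) := by
  have : Nonempty (Fin m) := ⟨⟨0, hm⟩⟩
  have hnorm : √(∑ i, (2 * √(V i)) ^ 2) = 2 * √(∑ i, V i) := by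
    simp_rw [mul_pow, Real.sq_sqrt (hV _).le, ← mul_sum]
    rw [Real.sqrt_mul (sq_nonneg 2), Real.sqrt_sq zero_le_two]
  rw [funext hc, ← hnorm]
  exact tendsto_supConv_div_sqrt hcs fun i => mul_pos two_pos (Real.sqrt_pos.2 (hV i))
end

section
/- Let a, b > 0 be real numbers such that a/b is irrational and there exists a real number p > 2 with LiouvilleWith p (a/b), i.e. there exist C > 0 and infinitely many positive integers m for which some integer n satisfies 0 < |a/b − n/m| < C/m^p. For L ≥ max(a,b) define δ_{a,b}(L) = min(a·m₋ − b·n₋, b·n₊ − a·m₊), where (m₋, n₋) is a pair of relatively prime integers with m₋ > 0 such that n₋/m₋ is maximal subject to n₋/m₋ ≤ a/b and a·m₋ ≤ L, and (m₊, n₊) is a pair of relatively prime integers with n₊ > 0 such that m₊/n₊ is maximal subject to m₊/n₊ ≤ b/a and b·n₊ ≤ L. Then liminf_{L→∞} L·δ_{a,b}(L) = 0. -/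
open Filter

lemma reduce_frac (m n : ℤ) (hm : 0 < m) :
    ∃ m' n' : ℤ, IsCoprime m' n' ∧ 0 < m' ∧ m' ≤ m ∧ (n' : ℝ) / m' = (n : ℝ) / m := by
  set d : ℤ := (Int.gcd m n : ℤ) with hd
  have hdpos : 0 < d := by
    have h0 : m ≠ 0 := hm.ne'
    rw [hd]
    exact_mod_cast Int.gcd_pos_of_ne_zero_left n h0
  have hdm : d ∣ m := Int.gcd_dvd_left m n
  have hdn : d ∣ n := Int.gcd_dvd_right m n
  obtain ⟨k, hk⟩ := hdm
  obtain ⟨l, hl⟩ := hdn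
  have hkpos : 0 < k := by nlinarith [hk ▸ hm]
  refine ⟨k, l, ?_, hkpos, ?_, ?_⟩
  · rw [Int.isCoprime_iff_gcd_eq_one]
    have hdpos' : 0 < Int.gcd m n := by
      rw [hd] at hdpos; exact_mod_cast hdpos
    have h := Int.gcd_div_gcd_div_gcd (i := m) (j := n) hdpos'
    have hk' : m / d = k := by rw [hk]; exact Int.mul_ediv_cancel_left k hdpos.ne'
    have hl' : n / d = l := by rw [hl]; exact Int.mul_ediv_cancel_left l hdpos.ne'
    rwa [← hd, hk', hl'] at h
  · nlinarith [hk ▸ hm]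
  · have hkR : (k : ℝ) ≠ 0 := by exact_mod_cast hkpos.ne'
    have hdR : (d : ℝ) ≠ 0 := by exact_mod_cast hdpos.ne'
    rw [hk, hl]
    push_cast
    field_simp

set_option maxHeartbeats 2000000 in
theorem stmt_10 (a b : ℝ) (ha : 0 < a) (hb : 0 < b)
    (hirr : Irrational (a / b)) (hliou : ∃ p : ℝ, 2 < p ∧ LiouvilleWith p (a / b))
    (δ : ℝ → ℝ)
    (hδ : ∀ L : ℝ, max a b ≤ L →
      ∃ mm nm mp np : ℤ,
        (IsCoprime mm nm ∧ 0 < mm ∧ (nm : ℝ) / mm ≤ a / b ∧ a * mm ≤ L ∧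
          ∀ m n : ℤ, IsCoprime m n → 0 < m → (n : ℝ) / m ≤ a / b → a * m ≤ L →
            (n : ℝ) / m ≤ (nm : ℝ) / mm) ∧
        (IsCoprime mp np ∧ 0 < np ∧ (mp : ℝ) / np ≤ b / a ∧ b * np ≤ L ∧
          ∀ m n : ℤ, IsCoprime m n → 0 < n → (m : ℝ) / n ≤ b / a → b * n ≤ L →
            (m : ℝ) / n ≤ (mp : ℝ) / np) ∧
        δ L = min (a * mm - b * nm) (b * np - a * mp)) :
    liminf (fun L : ℝ => L * δ L) atTop = 0 := by
  obtain ⟨p, hp2, C, hC⟩ := hliou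
  -- δ is nonnegative beyond max a b
  have hδ0 : ∀ L : ℝ, max a b ≤ L → 0 ≤ δ L := by
    intro L hL
    obtain ⟨mm, nm, mp, np, ⟨_, hmm, hle1, _, _⟩, ⟨_, hnp, hle2, _, _⟩, hδL⟩ := hδ L hL
    have hmm' : (0:ℝ) < mm := by exact_mod_cast hmm
    have hnp' : (0:ℝ) < np := by exact_mod_cast hnp
    rw [hδL]
    apply le_min
    · have := (div_le_div_iff₀ hmm' hb).mp hle1
      linarith
    · have := (div_le_div_iff₀ hnp' ha).mp hle2
      linarith
  have hbdd : ∀ᶠ L : ℝ in atTop, 0 ≤ L * δ L := by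
    filter_upwards [eventually_ge_atTop (max a b)] with L hL
    have h0L : 0 ≤ L := le_trans (le_trans ha.le (le_max_left a b)) hL
    exact mul_nonneg h0L (hδ0 L hL)
  set K : ℝ := a * b * C + b * C * (a + b * C) with hK
  -- the key frequently statement
  have key : ∀ ε : ℝ, 0 < ε → ∃ᶠ L : ℝ in atTop, L * δ L ≤ ε := by
    intro ε hε
    rw [frequently_atTop]
    intro L₀
    obtain ⟨N₀, hN₀⟩ := exists_nat_ge (max L₀ (max a b) / a)
    set N : ℕ := max N₀ 1 with hN
    have htend : Tendsto (fun m : ℕ => K * (m : ℝ) ^ ((2:ℝ) - p)) atTop (nhds 0) := by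
      have h1 : Tendsto (fun x : ℝ => x ^ (-(p - 2))) atTop (nhds 0) :=
        tendsto_rpow_neg_atTop (by linarith)
      have h2 := (h1.comp (tendsto_natCast_atTop_atTop (R := ℝ))).const_mul K
      simpa [mul_zero, Function.comp, show -(p - 2) = (2:ℝ) - p by ring] using h2
    have hev : ∀ᶠ m : ℕ in atTop, K * (m : ℝ) ^ ((2:ℝ) - p) < ε ∧ N ≤ m :=
      (htend.eventually (gt_mem_nhds hε)).and (eventually_ge_atTop N)
    obtain ⟨m, ⟨⟨n, hne, habs⟩, hsmall, hmN⟩⟩ := (hC.and_eventually hev).exists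
    have hm1 : 1 ≤ m := le_trans (le_max_right N₀ 1) hmN
    have hmR : (1:ℝ) ≤ (m : ℝ) := by exact_mod_cast hm1
    have hmpos : (0:ℝ) < (m : ℝ) := by linarith
    have hmppos : (0:ℝ) < (m : ℝ) ^ p := Real.rpow_pos_of_pos hmpos p
    have hmp1 : (1:ℝ) ≤ (m : ℝ) ^ p := Real.one_le_rpow hmR (by linarith)
    have hCpos : 0 < C := by
      have h0 : 0 < C / (m : ℝ) ^ p := lt_of_le_of_lt (abs_nonneg _) habs
      rcases div_pos_iff.mp h0 with ⟨h, _⟩ | ⟨_, h⟩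
      · exact h
      · linarith
    -- a * m dominates max L₀ (max a b)
    have hmN₀ : (N₀ : ℝ) ≤ (m : ℝ) := by
      exact_mod_cast le_trans (le_max_left N₀ 1) hmN
    have hmaN : max L₀ (max a b) ≤ a * m := by
      rw [div_le_iff₀ ha] at hN₀
      nlinarith
    -- rewrite the smallness bound
    have hpow2 : (m : ℝ) ^ ((2:ℝ) - p) = (m : ℝ) ^ (2:ℕ) / (m : ℝ) ^ p := by
      rw [Real.rpow_sub hmpos]
      congr 1
      rw [← Real.rpow_natCast (m : ℝ) 2]
      norm_num
    rw [hpow2] at hsmall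
    set T : ℝ := (m : ℝ) ^ (2:ℕ) / (m : ℝ) ^ p with hT
    have hTpos : 0 < T := by positivity
    have hmZ : (0:ℤ) < (m : ℤ) := by exact_mod_cast hm1
    rcases lt_or_gt_of_ne hne with hgt | hlt
    · -- a/b < n/m : use the "plus" side, L = b * n
      have hnRpos : (0:ℝ) < (n : ℝ) := by
        have h0 : (0:ℝ) < (n : ℝ) / m := lt_trans (div_pos ha hb) hgt
        by_contra h
        push_neg at h
        have := div_nonpos_of_nonpos_of_nonneg h hmpos.le
        linarith
      have hn0 : (0:ℤ) < n := by exact_mod_cast hnRpos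
      have hamlt : a * m < b * n := by
        have := (div_lt_div_iff₀ hb hmpos).mp hgt
        linarith
      set L : ℝ := b * n with hLdef
      have hLmax : max a b ≤ L := le_trans (le_max_right _ _) (le_trans hmaN hamlt.le)
      have hLL₀ : L₀ ≤ L := le_trans (le_max_left _ _) (le_trans hmaN hamlt.le)
      obtain ⟨mm, nm, mp, np, _, ⟨hcop2, hnp, hle2, hbnp, hmax2⟩, hδL⟩ := hδ L hLmax
      obtain ⟨n₁, m₁, hcop₁, hn₁pos, hn₁le, heq₁⟩ := reduce_frac n (m : ℤ) hn0
      have hnpR : (0:ℝ) < (np : ℝ) := by exact_mod_cast hnp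
      have hmn_le : (m : ℝ) / n ≤ b / a := by
        rw [div_le_div_iff₀ hnRpos ha]
        nlinarith
      have hn₁R : (n₁ : ℝ) ≤ (n : ℝ) := by exact_mod_cast hn₁le
      have hcand : (m : ℝ) / n ≤ (mp : ℝ) / np := by
        have := hmax2 m₁ n₁ hcop₁.symm hn₁pos (by rw [heq₁]; push_cast; exact hmn_le)
          (by rw [hLdef]; nlinarith)
        rw [heq₁] at this
        push_cast at this
        linarith
      have hnple : (np : ℝ) ≤ (n : ℝ) := by
        have : b * np ≤ b * n := hbnp
        nlinarith
      have hdle : δ L ≤ b * np - a * mp := hδL ▸ min_le_right _ _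
      -- b * np - a * mp ≤ b * n - a * m
      have hstep : b * np - a * mp ≤ b * n - a * m := by
        have e1 : b * np - a * mp = a * np * (b / a - (mp : ℝ) / np) := by
          field_simp
        have e2 : b * (n:ℝ) - a * m = a * n * (b / a - (m : ℝ) / n) := by
          field_simp
        rw [e1, e2]
        apply mul_le_mul (by nlinarith) (by linarith) (by linarith) (by nlinarith)
      -- b * n - a * m < b * m * (C / m ^ p)
      have habs' : (n : ℝ) / m - a / b < C / (m : ℝ) ^ p := by
        have := abs_sub_lt_iff.mp habs
        linarith [this.2]
      have hbn : b * (n:ℝ) - a * m = b * m * ((n : ℝ) / m - a / b) := by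
        field_simp
      have hδle : δ L ≤ b * m * (C / (m : ℝ) ^ p) := by
        have : b * (n:ℝ) - a * m ≤ b * m * (C / (m : ℝ) ^ p) := by
          rw [hbn]
          nlinarith
        linarith
      -- L ≤ m * (a + b * C)
      have hnm_ub : (n : ℝ) / m ≤ a / b + C := by
        have hCle : C / (m : ℝ) ^ p ≤ C := div_le_self hCpos.le hmp1
        linarith
      have hLub : L ≤ (m : ℝ) * (a + b * C) := by
        have : (n : ℝ) ≤ (m : ℝ) * (a / b + C) := by
          rw [div_le_iff₀ hmpos] at hnm_ub
          linarith
        have hba : b * ((m:ℝ) * (a / b + C)) = (m : ℝ) * (a + b * C) := by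
          have hx : (a / b) * b = a := div_mul_cancel₀ a hb.ne'
          linear_combination (m : ℝ) * hx
        rw [hLdef, ← hba]
        nlinarith
      refine ⟨L, hLL₀, ?_⟩
      have hδnn : 0 ≤ δ L := hδ0 L hLmax
      have hfin : L * δ L ≤ (m : ℝ) * (a + b * C) * (b * m * (C / (m : ℝ) ^ p)) :=
        mul_le_mul hLub hδle hδnn (by positivity)
      have heqT : (m : ℝ) * (a + b * C) * (b * m * (C / (m : ℝ) ^ p))
          = b * C * (a + b * C) * T := by
        rw [hT]
        field_simp
      have hKT : b * C * (a + b * C) * T ≤ K * T := by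
        have : 0 ≤ a * b * C * T := by positivity
        rw [hK]; nlinarith
      linarith
    · -- n/m < a/b : use the "minus" side, L = a * m
      set L : ℝ := a * m with hLdef
      have hLmax : max a b ≤ L := le_trans (le_max_right _ _) hmaN
      have hLL₀ : L₀ ≤ L := le_trans (le_max_left _ _) hmaN
      obtain ⟨mm, nm, mp, np, ⟨hcop1, hmm, hle1, hamm, hmax1⟩, _, hδL⟩ := hδ L hLmax
      obtain ⟨m₁, n₁, hcop₁, hm₁pos, hm₁le, heq₁⟩ := reduce_frac (m : ℤ) n hmZ
      have hmmR : (0:ℝ) < (mm : ℝ) := by exact_mod_cast hmm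
      have hm₁R : (m₁ : ℝ) ≤ (m : ℝ) := by exact_mod_cast hm₁le
      have hcand : (n : ℝ) / m ≤ (nm : ℝ) / mm := by
        have := hmax1 m₁ n₁ hcop₁ hm₁pos (by rw [heq₁]; push_cast; exact hlt.le)
          (by rw [hLdef]; nlinarith)
        rw [heq₁] at this
        push_cast at this
        linarith
      have hmmle : (mm : ℝ) ≤ (m : ℝ) := by
        have : a * mm ≤ a * m := hamm
        nlinarith
      have hdle : δ L ≤ a * mm - b * nm := hδL ▸ min_le_left _ _
      have habs' : a / b - (n : ℝ) / m < C / (m : ℝ) ^ p := by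
        have := abs_sub_lt_iff.mp habs
        linarith [this.1]
      have e1 : a * mm - b * nm = b * mm * (a / b - (nm : ℝ) / mm) := by
        field_simp
      have hδle : δ L ≤ b * m * (C / (m : ℝ) ^ p) := by
        have h1 : a / b - (nm : ℝ) / mm ≤ C / (m : ℝ) ^ p := by linarith
        have h2 : 0 ≤ a / b - (nm : ℝ) / mm := by linarith
        have : b * mm * (a / b - (nm : ℝ) / mm) ≤ b * m * (C / (m : ℝ) ^ p) :=
          mul_le_mul (by nlinarith) h1 h2 (by positivity)
        linarith [e1 ▸ hdle]
      refine ⟨L, hLL₀, ?_⟩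
      have hδnn : 0 ≤ δ L := hδ0 L hLmax
      have hfin : L * δ L ≤ a * m * (b * m * (C / (m : ℝ) ^ p)) :=
        mul_le_mul le_rfl hδle hδnn (by positivity)
      have heqT : a * (m:ℝ) * (b * m * (C / (m : ℝ) ^ p)) = a * b * C * T := by
        rw [hT]
        field_simp
      have hKT : a * b * C * T ≤ K * T := by
        have : 0 ≤ b * C * (a + b * C) * T := by positivity
        rw [hK]; nlinarith
      linarith
  -- conclude
  have hB : IsBoundedUnder (· ≥ ·) atTop (fun L : ℝ => L * δ L) :=
    isBoundedUnder_of_eventually_ge hbdd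
  have hle : liminf (fun L : ℝ => L * δ L) atTop ≤ 0 := by
    apply le_of_forall_pos_le_add
    intro ε hε
    have := liminf_le_of_frequently_le (key ε hε) hB
    linarith
  have hge : (0:ℝ) ≤ liminf (fun L : ℝ => L * δ L) atTop :=
    le_liminf_of_le (IsCoboundedUnder.of_frequently_le (key 1 one_pos)) hbdd
  exact le_antisymm hle hge
end

section
/- Let a, b > 0 be real numbers. Let N ≥ 1 and let P₀, P₁, …, P_N ∈ ℤ_{≥0}² be lattice points with P₀ = (0, y₀) and P_N = (x_N, 0), such that each edge vector P_i − P_{i−1} equals (p_i, −q_i) with p_i, q_i ∈ ℤ_{≥0} not both zero, and the slopes are nonincreasing in the sense that q_i·p_{i+1} ≤ q_{i+1}·p_i for all 1 ≤ i < N. Writing P_i = (x_i, y_i), one has Σ_{i=1}^N max(a·q_i, b·p_i) = max_{0 ≤ i ≤ N} (b·x_i + a·y_i). -/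
theorem stmt_14 (a b : ℝ) (ha : 0 < a) (hb : 0 < b) (N : ℕ) (hN : 1 ≤ N)
    (P : ℕ → ℤ × ℤ) (p q : ℕ → ℤ)
    (hPnonneg : ∀ i ≤ N, 0 ≤ (P i).1 ∧ 0 ≤ (P i).2)
    (hstart : (P 0).1 = 0) (hend : (P N).2 = 0)
    (hedge : ∀ i, 1 ≤ i → i ≤ N → P i - P (i - 1) = (p i, -q i))
    (hpq : ∀ i, 1 ≤ i → i ≤ N → 0 ≤ p i ∧ 0 ≤ q i ∧ ¬(p i = 0 ∧ q i = 0))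
    (hslope : ∀ i, 1 ≤ i → i < N → q i * p (i + 1) ≤ q (i + 1) * p i) :
    (∑ i ∈ Finset.Icc 1 N, max (a * (q i : ℝ)) (b * (p i : ℝ))) =
      (Finset.Icc 0 N).sup' (Finset.nonempty_Icc.mpr (Nat.zero_le N))
        (fun i => b * ((P i).1 : ℝ) + a * ((P i).2 : ℝ)) := by
  classical
  set D : ℕ → ℝ := fun i => b * (p i : ℝ) - a * (q i : ℝ) with hDdef
  -- propagation of nonpositivity of D
  have hprop : ∀ i, 1 ≤ i → i < N → D i ≤ 0 → D (i + 1) ≤ 0 := by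
    intro i h1 h2 hDi
    obtain ⟨hp, hq, hne⟩ := hpq i h1 (le_of_lt h2)
    obtain ⟨hp', hq', _⟩ := hpq (i + 1) (by omega) (by omega)
    simp only [hDdef] at hDi ⊢
    have hq0 : 0 < q i := by
      rcases lt_or_eq_of_le hq with h | h
      · exact h
      · exfalso
        have hpz : (p i : ℝ) = 0 := by
          have hqz : (q i : ℝ) = 0 := by exact_mod_cast h.symm
          have hpc : (0:ℝ) ≤ (p i : ℝ) := by exact_mod_cast hp
          nlinarith
        have : p i = 0 := by exact_mod_cast hpz
        exact hne ⟨this, by omega⟩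
    have hs : (q i : ℝ) * (p (i+1) : ℝ) ≤ (q (i+1) : ℝ) * (p i : ℝ) := by
      exact_mod_cast hslope i h1 h2
    have hq0' : (0:ℝ) < (q i : ℝ) := by exact_mod_cast hq0
    have hq1' : (0:ℝ) ≤ (q (i+1) : ℝ) := by exact_mod_cast hq'
    nlinarith [mul_nonneg hq1' (le_of_lt hq0')]
  have hprop2 : ∀ i, 1 ≤ i → D i ≤ 0 → ∀ j, i ≤ j → j ≤ N → D j ≤ 0 := by
    intro i hi hDi j hij
    induction j, hij using Nat.le_induction with
    | base => intro _; exact hDi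
    | succ n hn ih => intro hnN; exact hprop n (le_trans hi hn) (by omega) (ih (by omega))
  -- breakpoint k
  obtain ⟨k, hkN, hkpos, hkneg⟩ :
      ∃ k, k ≤ N ∧ (∀ j, 1 ≤ j → j ≤ k → 0 < D j) ∧ (∀ j, k + 1 ≤ j → j ≤ N → D j ≤ 0) := by
    by_cases hex : ∃ m, (1 ≤ m ∧ m ≤ N) ∧ D m ≤ 0
    · set m := Nat.find hex with hm
      obtain ⟨⟨hm1, hmN⟩, hDm⟩ := Nat.find_spec hex
      refine ⟨m - 1, by omega, ?_, ?_⟩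
      · intro j hj1 hjm
        have hnot := Nat.find_min hex (m := j) (by omega)
        push_neg at hnot
        exact hnot ⟨hj1, by omega⟩
      · intro j hj1 hjN
        exact hprop2 m hm1 hDm j (by omega) hjN
    · push_neg at hex
      exact ⟨N, le_refl N, fun j hj1 hjN => hex j ⟨hj1, hjN⟩, fun j hj hjN => by omega⟩
  -- coordinates as sums
  have hcoord : ∀ n, 1 ≤ n → n ≤ N →
      ((P n).1 = (P (n-1)).1 + p n ∧ (P n).2 = (P (n-1)).2 - q n) := by
    intro n h1 h2
    have he := hedge n h1 h2
    rw [Prod.ext_iff] at he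
    simp [Prod.fst_sub, Prod.snd_sub] at he
    omega
  have hx : ∀ n, n ≤ N → ((P n).1 : ℝ) = ∑ i ∈ Finset.Ioc 0 n, (p i : ℝ) := by
    intro n
    induction n with
    | zero => intro _; simp [hstart]
    | succ n ih =>
      intro hn
      obtain ⟨h1, _⟩ := hcoord (n+1) (by omega) hn
      rw [Finset.sum_Ioc_succ_top (by omega), ← ih (by omega)]
      simp at h1
      push_cast [h1]; ring
  have hy : ∀ n, n ≤ N → ((P n).2 : ℝ) = ((P 0).2 : ℝ) - ∑ i ∈ Finset.Ioc 0 n, (q i : ℝ) := by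
    intro n
    induction n with
    | zero => intro _; simp
    | succ n ih =>
      intro hn
      obtain ⟨_, h2⟩ := hcoord (n+1) (by omega) hn
      rw [Finset.sum_Ioc_succ_top (by omega), ← sub_sub, ← ih (by omega)]
      simp at h2
      push_cast [h2]; ring
  -- f expressed via partial sums of D
  have hf : ∀ n, n ≤ N →
      b * ((P n).1 : ℝ) + a * ((P n).2 : ℝ) = a * ((P 0).2 : ℝ) + ∑ i ∈ Finset.Ioc 0 n, D i := by
    intro n hn
    rw [hx n hn, hy n hn]
    simp only [hDdef, Finset.sum_sub_distrib, Finset.mul_sum, mul_sub]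
    ring
  -- the maximum is attained at k
  have hIcc : Finset.Icc 1 N = Finset.Ioc 0 N := by
    rw [← Finset.Icc_add_one_left_eq_Ioc]; rfl
  have hsplitD : ∀ i j, i ≤ j → j ≤ N →
      (∑ l ∈ Finset.Ioc 0 j, D l) - (∑ l ∈ Finset.Ioc 0 i, D l) = ∑ l ∈ Finset.Ioc i j, D l := by
    intro i j hij hjN
    rw [← Finset.sum_Ioc_consecutive _ (Nat.zero_le i) hij]
    ring
  have hmaxle : ∀ i, i ≤ N →
      b * ((P i).1 : ℝ) + a * ((P i).2 : ℝ) ≤ b * ((P k).1 : ℝ) + a * ((P k).2 : ℝ) := by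
    intro i hi
    rw [hf i hi, hf k hkN]
    rcases le_total i k with h | h
    · have : (0:ℝ) ≤ ∑ l ∈ Finset.Ioc i k, D l := by
        apply Finset.sum_nonneg
        intro l hl
        rw [Finset.mem_Ioc] at hl
        exact le_of_lt (hkpos l (by omega) hl.2)
      have hs := hsplitD i k h hkN
      linarith
    · have : (∑ l ∈ Finset.Ioc k i, D l) ≤ 0 := by
        apply Finset.sum_nonpos
        intro l hl
        rw [Finset.mem_Ioc] at hl
        exact hkneg l (by omega) (by omega)
      have hs := hsplitD k i h hi
      linarith
  have hrhs : (Finset.Icc 0 N).sup' (Finset.nonempty_Icc.mpr (Nat.zero_le N))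
      (fun i => b * ((P i).1 : ℝ) + a * ((P i).2 : ℝ))
      = b * ((P k).1 : ℝ) + a * ((P k).2 : ℝ) := by
    apply le_antisymm
    · apply Finset.sup'_le
      intro i hi
      rw [Finset.mem_Icc] at hi
      exact hmaxle i hi.2
    · exact Finset.le_sup' (fun i => b * ((P i).1 : ℝ) + a * ((P i).2 : ℝ)) (Finset.mem_Icc.mpr ⟨Nat.zero_le k, hkN⟩)
  rw [hrhs, hIcc]
  -- split the sum at k
  rw [← Finset.sum_Ioc_consecutive _ (Nat.zero_le k) hkN]
  have h1 : ∑ i ∈ Finset.Ioc 0 k, max (a * (q i : ℝ)) (b * (p i : ℝ))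
      = ∑ i ∈ Finset.Ioc 0 k, b * (p i : ℝ) := by
    apply Finset.sum_congr rfl
    intro i hi
    rw [Finset.mem_Ioc] at hi
    have := hkpos i (by omega) hi.2
    simp only [hDdef] at this
    exact max_eq_right (by linarith)
  have h2 : ∑ i ∈ Finset.Ioc k N, max (a * (q i : ℝ)) (b * (p i : ℝ))
      = ∑ i ∈ Finset.Ioc k N, a * (q i : ℝ) := by
    apply Finset.sum_congr rfl
    intro i hi
    rw [Finset.mem_Ioc] at hi
    have := hkneg i (by omega) hi.2
    simp only [hDdef] at this
    exact max_eq_left (by linarith)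
  rw [h1, h2]
  -- compute
  have hxk : ((P k).1 : ℝ) = ∑ i ∈ Finset.Ioc 0 k, (p i : ℝ) := hx k hkN
  have hyk : ((P k).2 : ℝ) = ∑ i ∈ Finset.Ioc k N, (q i : ℝ) := by
    have hN0 : ((P N).2 : ℝ) = ((P 0).2 : ℝ) - ∑ i ∈ Finset.Ioc 0 N, (q i : ℝ) := hy N (le_refl N)
    rw [hend] at hN0
    have hsplit := Finset.sum_Ioc_consecutive (fun i => (q i : ℝ)) (Nat.zero_le k) hkN
    rw [hy k hkN]
    push_cast at hN0
    linarith [hsplit]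
  rw [hxk, hyk, Finset.mul_sum, Finset.mul_sum]
end
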